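/- Let σ ∈ R\{0}, H_0(φ) = (1/2)∫_{R²}|∇φ|² + (σ/3)∫_{R²}φ³, H*_{0,1} = inf{H_0(φ) : ‖φ‖_{L²(R²)}² = 1}, and H(φ) = H_0(φ) + A(∫_{R²}φ²)². If A > |H*_{0,1}|, then inf_{φ ∈ H^1(R²)} H(φ) = 0 and φ = 0 is the unique minimizer. -/

import Mathlib

/-!
For `q = ∫φ² > 0` the function `q⁻¹ φ(q^{-1/2} ·)` has unit mass and energy `q⁻² H₀(φ)`: in two
dimensions the dilation leaves `∫|∇φ|²` invariant and multiplies `∫φ³` by `q`, so both terms of `H₀`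
pick up the same factor. Hence `H₀(φ) ≥ q² H*_{0,1}` and `H(φ) ≥ q² (H*_{0,1} + A)`, whose coefficient
is positive when `A > |H*_{0,1}|`. So `H ≥ 0 = H(0)`, and `H(φ) = 0` forces `q = 0`, i.e. `φ = 0` by
continuity.
-/

open MeasureTheory

noncomputable section

/-- Membership in `H^1(ℝ²)` (together with its embedding into `L³`), modelled via
`C^1` regularity and integrability of `|∇φ|²`, `φ²`, and `|φ|³`. -/
def InH1 (φ : EuclideanSpace ℝ (Fin 2) → ℝ) : Prop :=
  ContDiff ℝ 1 φ ∧ Integrable (fun x => ‖fderiv ℝ φ x‖ ^ 2) ∧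
    Integrable (fun x => φ x ^ 2) ∧ Integrable (fun x => |φ x| ^ 3)

/-- The Hamiltonian `H₀(φ) = (1/2)∫|∇φ|² + (σ/3)∫φ³` on `ℝ²`. -/
def H0 (σ : ℝ) (φ : EuclideanSpace ℝ (Fin 2) → ℝ) : ℝ :=
  (1 / 2) * (∫ x, ‖fderiv ℝ φ x‖ ^ 2) + (σ / 3) * ∫ x, φ x ^ 3

/-- The grand-canonical Hamiltonian `H(φ) = H₀(φ) + A(∫φ²)²` on `ℝ²`. -/
def Ham (σ A : ℝ) (φ : EuclideanSpace ℝ (Fin 2) → ℝ) : ℝ :=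
  H0 σ φ + A * (∫ x, φ x ^ 2) ^ 2

/-- The set of values `H₀(φ)` over the unit-mass constraint `∫φ² = 1`. -/
def S01 (σ : ℝ) : Set ℝ :=
  {r : ℝ | ∃ φ, InH1 φ ∧ (∫ x, φ x ^ 2) = 1 ∧ H0 σ φ = r}

local notation "ℝ²" => EuclideanSpace ℝ (Fin 2)

lemma integral_comp_smul_plane (f : ℝ² → ℝ) (l : ℝ) :
    ∫ x, f (l • x) = (l ^ 2)⁻¹ * ∫ x, f x := by
  rw [Measure.integral_comp_smul, finrank_euclideanSpace_fin, abs_inv, abs_sq, smul_eq_mul]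

def rescale (c l : ℝ) (φ : ℝ² → ℝ) : ℝ² → ℝ := fun x => c * φ (l • x)

lemma fderiv_rescale (c l : ℝ) (φ : ℝ² → ℝ) (x : ℝ²) :
    fderiv ℝ (rescale c l φ) x = (c * l) • fderiv ℝ φ (l • x) := by
  change fderiv ℝ (c • fun y => φ (l • y)) x = _
  rw [fderiv_const_smul_field, Pi.smul_apply, fderiv_comp_smul, smul_smul]

lemma integral_norm_fderiv_rescale_sq (c : ℝ) {l : ℝ} (hl : l ≠ 0) (φ : ℝ² → ℝ) :
    ∫ x, ‖fderiv ℝ (rescale c l φ) x‖ ^ 2 = c ^ 2 * ∫ x, ‖fderiv ℝ φ x‖ ^ 2 := by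
  simp_rw [fderiv_rescale, norm_smul, mul_pow, Real.norm_eq_abs, sq_abs]
  rw [integral_const_mul, integral_comp_smul_plane (fun y => ‖fderiv ℝ φ y‖ ^ 2)]
  field_simp

lemma integral_rescale_pow (c l : ℝ) (φ : ℝ² → ℝ) (n : ℕ) :
    ∫ x, rescale c l φ x ^ n = c ^ n * (l ^ 2)⁻¹ * ∫ x, φ x ^ n := by
  simp_rw [rescale, mul_pow]
  rw [integral_const_mul, integral_comp_smul_plane (fun y => φ y ^ n), mul_assoc]

lemma InH1.rescale {φ : ℝ² → ℝ} (hφ : InH1 φ) (c : ℝ) {l : ℝ} (hl : l ≠ 0) :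
    InH1 (rescale c l φ) := by
  obtain ⟨hsmooth, hgrad, hsq, hcube⟩ := hφ
  refine ⟨contDiff_const.mul (hsmooth.comp (contDiff_const_smul l)), ?_, ?_, ?_⟩
  · simp_rw [fderiv_rescale, norm_smul, mul_pow]
    exact ((hgrad.comp_smul hl).const_mul _)
  · simp_rw [_root_.rescale, mul_pow]
    exact ((hsq.comp_smul hl).const_mul _)
  · simp_rw [_root_.rescale, abs_mul, mul_pow]
    exact ((hcube.comp_smul hl).const_mul _)

lemma exists_mem_S01_H0_eq_mass_sq_mul (σ : ℝ) {φ : ℝ² → ℝ} (hφ : InH1 φ)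
    (hq : 0 < ∫ x, φ x ^ 2) : ∃ r ∈ S01 σ, H0 σ φ = (∫ x, φ x ^ 2) ^ 2 * r := by
  set q := ∫ x, φ x ^ 2 with hq_def
  have hl : (((√q)⁻¹) ^ 2)⁻¹ = q := by rw [inv_pow, inv_inv, Real.sq_sqrt hq.le]
  have hl0 : (√q)⁻¹ ≠ 0 := by positivity
  refine ⟨H0 σ (rescale q⁻¹ (√q)⁻¹ φ), ⟨_, hφ.rescale _ hl0, ?_, rfl⟩, ?_⟩
  · rw [integral_rescale_pow, ← hq_def, hl]
    field_simp
  · rw [H0, H0, integral_norm_fderiv_rescale_sq _ hl0, integral_rescale_pow, hl]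
    field_simp

lemma inH1_zero : InH1 0 := by
  refine ⟨contDiff_const, ?_, ?_, ?_⟩ <;> simp

lemma H0_zero (σ : ℝ) : H0 σ 0 = 0 := by
  simp [H0]

lemma Ham_zero (σ A : ℝ) : Ham σ A 0 = 0 := by
  simp [Ham, H0_zero]

lemma eq_zero_of_integral_sq_eq_zero {φ : ℝ² → ℝ} (hφ : InH1 φ) (h : ∫ x, φ x ^ 2 = 0) :
    φ = 0 := by
  have hsq : (fun x => φ x ^ 2) =ᵐ[volume] 0 :=
    (integral_eq_zero_iff_of_nonneg (fun x => sq_nonneg _) hφ.2.2.1).1 h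
  refine (hφ.1.continuous.ae_eq_iff_eq volume continuous_zero).1 ?_
  filter_upwards [hsq] with x hx
  exact pow_eq_zero_iff two_ne_zero |>.1 hx

lemma mass_sq_mul_sInf_le_H0 {σ : ℝ} (hbdd : BddBelow (S01 σ)) {φ : ℝ² → ℝ} (hφ : InH1 φ) :
    (∫ x, φ x ^ 2) ^ 2 * sInf (S01 σ) ≤ H0 σ φ := by
  have hq0 : 0 ≤ ∫ x, φ x ^ 2 := integral_nonneg fun x => sq_nonneg _
  rcases hq0.eq_or_lt with hq | hq
  · rw [← hq, eq_zero_of_integral_sq_eq_zero hφ hq.symm, H0_zero]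
    simp
  · obtain ⟨r, hr, hH0⟩ := exists_mem_S01_H0_eq_mass_sq_mul σ hφ hq
    rw [hH0]
    exact mul_le_mul_of_nonneg_left (csInf_le hbdd hr) (sq_nonneg _)

lemma mass_sq_mul_le_Ham {σ : ℝ} (A : ℝ) (hbdd : BddBelow (S01 σ)) {φ : ℝ² → ℝ} (hφ : InH1 φ) :
    (∫ x, φ x ^ 2) ^ 2 * (sInf (S01 σ) + A) ≤ Ham σ A φ := by
  rw [Ham, mul_add, mul_comm _ A]
  gcongr
  exact mass_sq_mul_sInf_le_H0 hbdd hφ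

theorem stmt6_general (σ A : ℝ)
    (hbdd : BddBelow (S01 σ))
    (hA : |sInf (S01 σ)| < A) :
    IsLeast {r : ℝ | ∃ φ, InH1 φ ∧ Ham σ A φ = r} 0 ∧
    ∀ φ, InH1 φ → Ham σ A φ = 0 → φ = 0 := by
  have hcoeff : 0 < sInf (S01 σ) + A := by linarith [neg_abs_le (sInf (S01 σ))]
  refine ⟨⟨⟨0, inH1_zero, Ham_zero σ A⟩, ?_⟩, fun φ hφ hHam => ?_⟩
  · rintro _ ⟨φ, hφ, rfl⟩
    exact (mul_nonneg (sq_nonneg _) hcoeff.le).trans (mass_sq_mul_le_Ham A hbdd hφ)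
  · have hmass := mass_sq_mul_le_Ham A hbdd hφ
    rw [hHam] at hmass
    refine eq_zero_of_integral_sq_eq_zero hφ (pow_eq_zero_iff two_ne_zero |>.1 ?_)
    exact le_antisymm (nonpos_of_mul_nonpos_left hmass hcoeff) (sq_nonneg _)

/-- If `A > |H*_{0,1}|` (with `-∞ < H*_{0,1} < 0`), then
`inf_{φ ∈ H¹(ℝ²)} H(φ) = 0` and `φ = 0` is the unique minimizer. -/
theorem stmt6 (σ A : ℝ) (hσ : σ ≠ 0)
    (hbdd : BddBelow (S01 σ)) (hne : (S01 σ).Nonempty) (hneg : sInf (S01 σ) < 0)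
    (hA : |sInf (S01 σ)| < A) :
    IsLeast {r : ℝ | ∃ φ, InH1 φ ∧ Ham σ A φ = r} 0 ∧
    ∀ φ, InH1 φ → Ham σ A φ = 0 → φ = 0 :=
  stmt6_general σ A hbdd hA
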